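/- Fix a real number c and an integer m ≥ 1. Consider Ising spins on a chain of m free sites whose two ends are additionally coupled to fixed boundary spins in the +1 state, with bond weight w(s,s′) = 1 if s = s′ and c otherwise (so there are m+1 bonds in total, including the two boundary bonds). Then ∑_{s : Fin m → {±1}} w(+1, s_1) · (∏_{i=1}^{m−1} w(s_i, s_{i+1})) · w(s_m, +1) = ((1+c)^{m+1} + (1−c)^{m+1})/2. With c = e^{−ε·α(t)}, this is the infinite-q partial spectral form factor of the one-dimensional global-TRS random phase model for a single connected subregion A of m sites. -/
import Mathlib


open BigOperators

/-- Ising chain of `m` free sites whose two ends are additionally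
coupled to fixed boundary spins in the `+1` (here `true`) state, with bond weight `1`
for equal spins and `c` otherwise (`m+1` bonds in total): the partition function is
`((1+c)^{m+1} + (1−c)^{m+1})/2`.  (With `c = e^{−ε α(t)}` this is the infinite-`q`
partial spectral form factor of the 1D global-TRS random phase model for a connected
subregion of `m` sites.) -/

private def wgt (c : ℝ) (a b : Bool) : ℝ := if a = b then 1 else c

private def hh (c : ℝ) : ℕ → Bool → ℝ
  | 0, a => wgt c a true
  | n+1, a => wgt c a true * hh c n true + wgt c a false * hh c n false

private def FF (c : ℝ) (k : ℕ) (g : Bool → ℝ) : ℝ :=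
  ∑ s : Fin (k+1) → Bool,
    wgt c true (s 0) * (∏ i : Fin k, wgt c (s i.castSucc) (s i.succ)) * g (s (Fin.last k))

private lemma FF_zero (c : ℝ) (g : Bool → ℝ) :
    FF c 0 g = ∑ b : Bool, wgt c true b * g b := by
  rw [FF, ← (Equiv.funUnique (Fin 1) Bool).symm.sum_comp]
  simp [Equiv.funUnique]

private lemma FF_succ (c : ℝ) (k : ℕ) (g : Bool → ℝ) :
    FF c (k+1) g = FF c k (fun a => ∑ b : Bool, wgt c a b * g b) := by
  rw [FF, ← (Fin.snocEquiv (fun _ : Fin (k+2) => Bool)).sum_comp, Fintype.sum_prod_type_right, FF]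
  refine Finset.sum_congr rfl fun s _ => ?_
  rw [Finset.mul_sum]
  refine Finset.sum_congr rfl fun b _ => ?_
  simp only [Fin.snocEquiv, Equiv.coe_fn_mk]
  have h0 : (Fin.snoc s b : Fin (k+2) → Bool) 0 = s 0 := by
    have h : (0 : Fin (k+2)) = Fin.castSucc 0 := rfl
    rw [h, Fin.snoc_castSucc]
  rw [h0, Fin.snoc_last, Fin.prod_univ_castSucc]
  simp only [Fin.succ_castSucc, Fin.snoc_castSucc, Fin.succ_last, Fin.snoc_last]
  ring

private lemma FF_hh (c : ℝ) : ∀ k n, FF c k (hh c n) = hh c (n + k + 1) true := by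
  intro k
  induction k with
  | zero =>
      intro n
      rw [FF_zero]
      simp [hh, wgt]
  | succ k ih =>
      intro n
      rw [FF_succ]
      have : (fun a => ∑ b : Bool, wgt c a b * hh c n b) = hh c (n+1) := by
        funext a
        simp [hh]
      rw [this, ih]
      congr 1
      omega

private lemma hh_closed (c : ℝ) : ∀ n, hh c n true = ((1+c)^(n+1) + (1-c)^(n+1))/2 ∧
    hh c n false = ((1+c)^(n+1) - (1-c)^(n+1))/2 := by
  intro n
  induction n with
  | zero => simp [hh, wgt]
  | succ n ih =>
      obtain ⟨h1, h2⟩ := ih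
      constructor <;> · simp [hh, wgt, h1, h2]; ring

theorem ising_pinned_boundary_psff (c : ℝ) (m : ℕ) (hm : 1 ≤ m) :
    (∑ s : Fin m → Bool,
        (if (true : Bool) = s ⟨0, by omega⟩ then (1 : ℝ) else c) *
          (∏ i : Fin (m - 1),
            (if s ⟨i.1, by have := i.isLt; omega⟩ = s ⟨i.1 + 1, by have := i.isLt; omega⟩
              then (1 : ℝ) else c)) *
          (if s ⟨m - 1, by omega⟩ = (true : Bool) then (1 : ℝ) else c))
      = ((1 + c) ^ (m + 1) + (1 - c) ^ (m + 1)) / 2 := by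
  obtain ⟨k, rfl⟩ : ∃ k, m = k + 1 := ⟨m - 1, by omega⟩
  have key : FF c k (hh c 0) = hh c (k + 1) true := by
    have := FF_hh c k 0; simpa using this
  have hc := hh_closed c (k+1)
  have goal_eq : (∑ s : Fin (k+1) → Bool,
        (if (true : Bool) = s ⟨0, by omega⟩ then (1 : ℝ) else c) *
          (∏ i : Fin (k+1 - 1),
            (if s ⟨i.1, by have := i.isLt; omega⟩ = s ⟨i.1 + 1, by have := i.isLt; omega⟩
              then (1 : ℝ) else c)) *
          (if s ⟨k+1 - 1, by omega⟩ = (true : Bool) then (1 : ℝ) else c))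
      = FF c k (hh c 0) := by
    refine Finset.sum_congr rfl fun s _ => ?_
    rfl
  rw [goal_eq, key, hc.1]
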